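/- (Hierarchical-voting lower bound) Fix integers m, M, p, N with m, M, p ≥ 1 and N ≥ 2^m, and set q := (M + 2)m. For each i ∈ {1,…,m} and prefix w ∈ {0,1}^{i−1}, let r(i, w) ∈ [0,1] and let v(i, w) ∈ {YES, NO, INV} be a labeling such that v(i, w) = YES implies r(i, w) ≥ (1 − 2^{−p})/2^M and v(i, w) = NO implies r(i, w) ≤ 2^{−p}. For y ∈ {0,1}^m define P(y) := Π_{i=1}^m (r(i, y₁⋯y_{i−1}) if y_i = 1 else 1 − r(i, y₁⋯y_{i−1})), let val(y) := Σ_{i=1}^m y_i 2^{m−i}, and define Q(y) := P(y) · (2^{−q})^{(N−1) − val(y)}. Let A := {y : for all i, v(i, y₁⋯y_{i−1}) = YES ⟹ y_i = 1 and v(i, y₁⋯y_{i−1}) = NO ⟹ y_i = 0} (correct query strings) and B := {y ∉ A : for all i, not (v(i, y₁⋯y_{i−1}) = NO and y_i = 1)} (incorrect query strings whose every mistake answers 0 where the correct answer is 1). Then Σ_{y ∈ A} Q(y) − Σ_{y ∈ B} Q(y) ≥ (2^{−q})^{N−1} · (1/2^{Mm}) · (1 − 1/2^m − m/(2^p − 1)).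 -/

import Mathlib

/-- Labels of queries: a valid YES instance, a valid NO instance, or an invalid
(promise-violating) instance. -/
inductive QLabel where
  | yes : QLabel
  | no : QLabel
  | inv : QLabel
deriving DecidableEq

/-- The prefix `y₁⋯y_{i−1}` of a query string `y` (here zero-indexed). -/
def prefixOf {m : ℕ} (y : Fin m → Bool) (i : Fin m) : Fin i → Bool :=
  fun j => y ⟨j, j.isLt.trans i.isLt⟩

/-- `P(y) = Π_i (r(i, y₁⋯y_{i−1})` if `y_i = 1` else `1 − r(i, y₁⋯y_{i−1}))`: the
probability that the guessing phase produces query string `y`. -/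
noncomputable def guessProb (m : ℕ) (r : (i : Fin m) → (Fin i → Bool) → ℝ)
    (y : Fin m → Bool) : ℝ :=
  ∏ i : Fin m, if y i then r i (prefixOf y i) else 1 - r i (prefixOf y i)

/-- `val(y) = Σ_i y_i 2^{m−i}`: the integer value of the query string `y`. -/
def strVal (m : ℕ) (y : Fin m → Bool) : ℕ :=
  ∑ i : Fin m, if y i then 2 ^ (m - 1 - (i : ℕ)) else 0

/-- `Q(y) = P(y) · (2^{−q})^{(N−1) − val(y)}` with `q = (M+2)m`: the probability that `y`
survives the hierarchical voting phase. -/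
noncomputable def voteProb (m M N : ℕ) (r : (i : Fin m) → (Fin i → Bool) → ℝ)
    (y : Fin m → Bool) : ℝ :=
  guessProb m r y * ((1 : ℝ) / 2 ^ ((M + 2) * m)) ^ (N - 1 - strVal m y)

/-- `y` is a correct query string: it answers `1` on every YES query and `0` on every
NO query. -/
def IsCorrect (m : ℕ) (v : (i : Fin m) → (Fin i → Bool) → QLabel)
    (y : Fin m → Bool) : Prop :=
  ∀ i : Fin m, (v i (prefixOf y i) = QLabel.yes → y i = true) ∧
    (v i (prefixOf y i) = QLabel.no → y i = false)

/-- `y` is an incorrect query string all of whose mistakes answer `0` where the correct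
answer is `1`. -/
def IsIncorrect (m : ℕ) (v : (i : Fin m) → (Fin i → Bool) → QLabel)
    (y : Fin m → Bool) : Prop :=
  ¬ IsCorrect m v y ∧ ∀ i : Fin m, ¬ (v i (prefixOf y i) = QLabel.no ∧ y i = true)

instance (m : ℕ) (v : (i : Fin m) → (Fin i → Bool) → QLabel) :
    DecidablePred (IsCorrect m v) := fun y => by
  unfold IsCorrect; infer_instance

instance (m : ℕ) (v : (i : Fin m) → (Fin i → Bool) → QLabel) :
    DecidablePred (IsIncorrect m v) := fun y => by
  unfold IsIncorrect; infer_instance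

/-!
With `C = 2^q` and `N ≥ 2^m`, `Q(y) = C^{-(N-1)} · P(y) · C^{val(y)}`, so it suffices to bound the
signed weight `Σ_{y ∈ A} P(y) C^{val(y)} - Σ_{y ∈ B} P(y) C^{val(y)}` below by `ρ^m - m/C`, where
`ρ = (1 - 2^{-p})/2^M`. This goes by induction on `m`, splitting on the first answer, which
multiplies the weight by `C^{2^{m-1}}` when it is `1`. At a YES query all strings answering `0`
together weigh at most `C^{2^{m-1}-1}`, a factor `C` below that scale, so wrong answers cost only
`1/C`. At a NO query the strings answering `1` lie in neither `A` nor `B`, and the other branch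
keeps mass `1 - r ≥ 1 - 2^{-p} ≥ ρ`. At an invalid query both branches recurse; their signed
weights are nonnegative, so the factor `C^{2^{m-1}}` only helps. The standing assumption
`m/C ≤ ρ^m`, which keeps all these bounds nonnegative, holds because `ρ ≥ 2^{-(M+1)}`.
-/

open Finset

section Prefixes

variable {m : ℕ}

def tailGiven {α : Type*} (f : (i : Fin (m + 1)) → (Fin i → Bool) → α) (b : Bool) :
    (i : Fin m) → (Fin i → Bool) → α :=
  fun i w => f i.succ (Fin.cons b w)

@[simp]
lemma prefixOf_cons_zero (b : Bool) (z : Fin m → Bool) :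
    prefixOf (Fin.cons b z : Fin (m + 1) → Bool) 0 = Fin.elim0 :=
  funext fun j => j.elim0

@[simp]
lemma prefixOf_cons_succ (b : Bool) (z : Fin m → Bool) (i : Fin m) :
    prefixOf (Fin.cons b z : Fin (m + 1) → Bool) i.succ = Fin.cons b (prefixOf z i) := by
  funext j
  refine Fin.cases rfl (fun _ => rfl) j

lemma sum_fin_cons {M : Type*} [AddCommMonoid M] (f : (Fin (m + 1) → Bool) → M) :
    ∑ y, f y = ∑ z, f (Fin.cons true z) + ∑ z, f (Fin.cons false z) := by
  rw [← (Fin.consEquiv fun _ => Bool).sum_comp, Fintype.sum_prod_type, Fintype.sum_bool]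
  rfl

lemma guessProb_cons (r : (i : Fin (m + 1)) → (Fin i → Bool) → ℝ) (b : Bool)
    (z : Fin m → Bool) :
    guessProb (m + 1) r (Fin.cons b z) =
      (if b then r 0 Fin.elim0 else 1 - r 0 Fin.elim0) * guessProb m (tailGiven r b) z := by
  simp only [guessProb, Fin.prod_univ_succ, Fin.cons_zero, Fin.cons_succ, prefixOf_cons_zero,
    prefixOf_cons_succ]
  rfl

lemma strVal_cons (b : Bool) (z : Fin m → Bool) :
    strVal (m + 1) (Fin.cons b z) = (if b then 2 ^ m else 0) + strVal m z := by
  simp only [strVal, Fin.sum_univ_succ, Fin.cons_zero, Fin.cons_succ, Fin.val_zero,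
    Fin.val_succ]
  congr 1
  refine Finset.sum_congr rfl fun i _ => ?_
  congr 2
  omega

lemma isCorrect_cons (v : (i : Fin (m + 1)) → (Fin i → Bool) → QLabel) (b : Bool)
    (z : Fin m → Bool) :
    IsCorrect (m + 1) v (Fin.cons b z) ↔
      ((v 0 Fin.elim0 = .yes → b = true) ∧ (v 0 Fin.elim0 = .no → b = false)) ∧
        IsCorrect m (tailGiven v b) z := by
  simp only [IsCorrect, Fin.forall_fin_succ, Fin.cons_zero, Fin.cons_succ, prefixOf_cons_zero,
    prefixOf_cons_succ]
  rfl

end Prefixes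

def RespectsNo (m : ℕ) (v : (i : Fin m) → (Fin i → Bool) → QLabel) (y : Fin m → Bool) : Prop :=
  ∀ i : Fin m, v i (prefixOf y i) = .no → y i = false

instance (m : ℕ) (v : (i : Fin m) → (Fin i → Bool) → QLabel) :
    DecidablePred (RespectsNo m v) := fun y => by
  unfold RespectsNo; infer_instance

section Sign

variable {m : ℕ}

lemma respectsNo_cons (v : (i : Fin (m + 1)) → (Fin i → Bool) → QLabel) (b : Bool)
    (z : Fin m → Bool) :
    RespectsNo (m + 1) v (Fin.cons b z) ↔
      (v 0 Fin.elim0 = .no → b = false) ∧ RespectsNo m (tailGiven v b) z := by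
  simp only [RespectsNo, Fin.forall_fin_succ, Fin.cons_zero, Fin.cons_succ, prefixOf_cons_zero,
    prefixOf_cons_succ]
  rfl

lemma isIncorrect_iff (v : (i : Fin m) → (Fin i → Bool) → QLabel) (y : Fin m → Bool) :
    IsIncorrect m v y ↔ ¬ IsCorrect m v y ∧ RespectsNo m v y := by
  simp only [IsIncorrect, RespectsNo, Bool.not_eq_true, not_and]

def answerSign (m : ℕ) (v : (i : Fin m) → (Fin i → Bool) → QLabel) (y : Fin m → Bool) : ℝ :=
  if IsCorrect m v y then 1 else if RespectsNo m v y then -1 else 0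

lemma neg_one_le_answerSign (v : (i : Fin m) → (Fin i → Bool) → QLabel) (y : Fin m → Bool) :
    -1 ≤ answerSign m v y := by
  unfold answerSign
  split_ifs <;> norm_num

lemma sum_isCorrect_sub_sum_isIncorrect (v : (i : Fin m) → (Fin i → Bool) → QLabel)
    (f : (Fin m → Bool) → ℝ) :
    ∑ y ∈ univ.filter (IsCorrect m v), f y - ∑ y ∈ univ.filter (IsIncorrect m v), f y =
      ∑ y, answerSign m v y * f y := by
  rw [sum_filter, sum_filter, ← sum_sub_distrib]
  refine sum_congr rfl fun y _ => ?_
  by_cases hc : IsCorrect m v y <;> by_cases hn : RespectsNo m v y <;>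
    simp [answerSign, isIncorrect_iff, hc, hn]

lemma answerSign_cons_of_head_correct (v : (i : Fin (m + 1)) → (Fin i → Bool) → QLabel)
    {b : Bool} (hyes : v 0 Fin.elim0 = .yes → b = true)
    (hno : v 0 Fin.elim0 = .no → b = false) (z : Fin m → Bool) :
    answerSign (m + 1) v (Fin.cons b z) = answerSign m (tailGiven v b) z := by
  simp only [answerSign, isCorrect_cons, respectsNo_cons, eq_true hyes, eq_true hno, true_and]

lemma answerSign_cons_true_of_no (v : (i : Fin (m + 1)) → (Fin i → Bool) → QLabel)
    (hno : v 0 Fin.elim0 = .no) (z : Fin m → Bool) :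
    answerSign (m + 1) v (Fin.cons true z) = 0 := by
  simp [answerSign, isCorrect_cons, respectsNo_cons, hno]

end Sign

section Weights

variable {m : ℕ}

lemma guessProb_nonneg {r : (i : Fin m) → (Fin i → Bool) → ℝ} (hr0 : ∀ i w, 0 ≤ r i w)
    (hr1 : ∀ i w, r i w ≤ 1) (y : Fin m → Bool) : 0 ≤ guessProb m r y :=
  prod_nonneg fun i _ => by
    split
    · exact hr0 _ _
    · linarith [hr1 i (prefixOf y i)]

lemma sum_guessProb (r : (i : Fin m) → (Fin i → Bool) → ℝ) : ∑ y, guessProb m r y = 1 := by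
  induction m with
  | zero => simp [guessProb]
  | succ m ih => simp [sum_fin_cons, guessProb_cons, ← mul_sum, ih]

lemma strVal_lt (y : Fin m → Bool) : strVal m y < 2 ^ m := by
  induction m with
  | zero => simp [strVal]
  | succ m ih =>
    rw [← Fin.cons_self_tail y, strVal_cons]
    have := ih (Fin.tail y)
    split <;> omega

noncomputable def weightedGuessProb (m : ℕ) (r : (i : Fin m) → (Fin i → Bool) → ℝ) (C : ℝ)
    (y : Fin m → Bool) : ℝ :=
  guessProb m r y * C ^ strVal m y

lemma weightedGuessProb_nonneg {r : (i : Fin m) → (Fin i → Bool) → ℝ} {C : ℝ} (hC : 0 ≤ C)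
    (hr0 : ∀ i w, 0 ≤ r i w) (hr1 : ∀ i w, r i w ≤ 1) (y : Fin m → Bool) :
    0 ≤ weightedGuessProb m r C y :=
  mul_nonneg (guessProb_nonneg hr0 hr1 y) (pow_nonneg hC _)

lemma sum_weightedGuessProb_le {r : (i : Fin m) → (Fin i → Bool) → ℝ} {C : ℝ} (hC : 1 ≤ C)
    (hr0 : ∀ i w, 0 ≤ r i w) (hr1 : ∀ i w, r i w ≤ 1) :
    ∑ y, weightedGuessProb m r C y ≤ C ^ (2 ^ m - 1) :=
  calc ∑ y, weightedGuessProb m r C y ≤ ∑ y, guessProb m r y * C ^ (2 ^ m - 1) :=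
        sum_le_sum fun y _ => mul_le_mul_of_nonneg_left
          (pow_le_pow_right₀ hC (Nat.le_sub_one_of_lt (strVal_lt y)))
          (guessProb_nonneg hr0 hr1 y)
    _ = C ^ (2 ^ m - 1) := by rw [← sum_mul, sum_guessProb, one_mul]

lemma weightedGuessProb_cons (r : (i : Fin (m + 1)) → (Fin i → Bool) → ℝ) (C : ℝ) (b : Bool)
    (z : Fin m → Bool) :
    weightedGuessProb (m + 1) r C (Fin.cons b z) =
      (if b then r 0 Fin.elim0 * C ^ 2 ^ m else 1 - r 0 Fin.elim0) *
        weightedGuessProb m (tailGiven r b) C z := by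
  rw [weightedGuessProb, weightedGuessProb, guessProb_cons, strVal_cons, pow_add]
  cases b <;> simp only [Bool.false_eq_true, if_false, if_true, pow_zero] <;> ring

end Weights

section SignedWeight

variable {m : ℕ}

noncomputable def signedWeight (m : ℕ) (r : (i : Fin m) → (Fin i → Bool) → ℝ)
    (v : (i : Fin m) → (Fin i → Bool) → QLabel) (C : ℝ) : ℝ :=
  ∑ y, answerSign m v y * weightedGuessProb m r C y

noncomputable def signedWeightGiven (r : (i : Fin (m + 1)) → (Fin i → Bool) → ℝ)
    (v : (i : Fin (m + 1)) → (Fin i → Bool) → QLabel) (C : ℝ) (b : Bool) : ℝ :=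
  ∑ z, answerSign (m + 1) v (Fin.cons b z) * weightedGuessProb m (tailGiven r b) C z

lemma signedWeight_succ (r : (i : Fin (m + 1)) → (Fin i → Bool) → ℝ)
    (v : (i : Fin (m + 1)) → (Fin i → Bool) → QLabel) (C : ℝ) :
    signedWeight (m + 1) r v C =
      r 0 Fin.elim0 * C ^ 2 ^ m * signedWeightGiven r v C true +
        (1 - r 0 Fin.elim0) * signedWeightGiven r v C false := by
  simp only [signedWeight, signedWeightGiven, sum_fin_cons, weightedGuessProb_cons, mul_sum,
    if_true, Bool.false_eq_true, if_false]
  congr 1 <;> exact sum_congr rfl fun z _ => by ring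

lemma signedWeightGiven_of_head_correct (r : (i : Fin (m + 1)) → (Fin i → Bool) → ℝ)
    (v : (i : Fin (m + 1)) → (Fin i → Bool) → QLabel) (C : ℝ) {b : Bool}
    (hyes : v 0 Fin.elim0 = .yes → b = true) (hno : v 0 Fin.elim0 = .no → b = false) :
    signedWeightGiven r v C b = signedWeight m (tailGiven r b) (tailGiven v b) C := by
  simp only [signedWeightGiven, signedWeight, answerSign_cons_of_head_correct v hyes hno]

lemma signedWeightGiven_true_of_no (r : (i : Fin (m + 1)) → (Fin i → Bool) → ℝ)
    (v : (i : Fin (m + 1)) → (Fin i → Bool) → QLabel) (C : ℝ) (hno : v 0 Fin.elim0 = .no) :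
    signedWeightGiven r v C true = 0 := by
  simp [signedWeightGiven, answerSign_cons_true_of_no v hno]

lemma neg_le_signedWeightGiven {r : (i : Fin (m + 1)) → (Fin i → Bool) → ℝ}
    (v : (i : Fin (m + 1)) → (Fin i → Bool) → QLabel) {C : ℝ} (hC : 1 ≤ C)
    (hr0 : ∀ i w, 0 ≤ r i w) (hr1 : ∀ i w, r i w ≤ 1) (b : Bool) :
    -C ^ (2 ^ m - 1) ≤ signedWeightGiven r v C b :=
  calc -C ^ (2 ^ m - 1) ≤ ∑ z, -weightedGuessProb m (tailGiven r b) C z := by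
        rw [sum_neg_distrib, neg_le_neg_iff]
        exact sum_weightedGuessProb_le hC (fun _ _ => hr0 _ _) (fun _ _ => hr1 _ _)
    _ ≤ signedWeightGiven r v C b := sum_le_sum fun z _ => by
        have := weightedGuessProb_nonneg (zero_le_one.trans hC) (fun _ _ => hr0 _ _)
          (fun _ _ => hr1 _ _) z (r := tailGiven r b)
        nlinarith [neg_one_le_answerSign v (Fin.cons b z)]

end SignedWeight

lemma le_signedWeight_succ {ρ ε C L : ℝ} (hC : 1 ≤ C) (hε : 0 ≤ ε) (hρ0 : 0 ≤ ρ)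
    (hρε : ρ ≤ 1 - ε) {m : ℕ} (r : (i : Fin (m + 1)) → (Fin i → Bool) → ℝ)
    (v : (i : Fin (m + 1)) → (Fin i → Bool) → QLabel)
    (hr0 : ∀ i w, 0 ≤ r i w) (hr1 : ∀ i w, r i w ≤ 1)
    (hyes : v 0 Fin.elim0 = .yes → ρ ≤ r 0 Fin.elim0)
    (hno : v 0 Fin.elim0 = .no → r 0 Fin.elim0 ≤ ε)
    (hL : 0 ≤ ρ * L - 1 / C)
    (htail : ∀ b, L ≤ signedWeight m (tailGiven r b) (tailGiven v b) C) :
    ρ * L - 1 / C ≤ signedWeight (m + 1) r v C := by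
  have hC0 : 0 < C := one_pos.trans_le hC
  have hC' : 0 < 1 / C := by positivity
  have hL0 : 0 ≤ L := by nlinarith
  have hρL : ρ * L ≤ L := mul_le_of_le_one_left hL0 (by linarith)
  have hr00 := hr0 0 Fin.elim0
  have hr01 := hr1 0 Fin.elim0
  rw [signedWeight_succ]
  rcases hv : v 0 Fin.elim0
  case yes =>
    rw [signedWeightGiven_of_head_correct r v C (fun _ => rfl) (by simp [hv])]
    have hK : C ^ 2 ^ m = C ^ (2 ^ m - 1) * C := (pow_sub_one_mul (by positivity) C).symm
    have htrue : C ^ 2 ^ m * (ρ * L) ≤ r 0 Fin.elim0 * C ^ 2 ^ m *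
        signedWeight m (tailGiven r true) (tailGiven v true) C := by
      refine (mul_le_mul_of_nonneg_left
        (mul_le_mul (hyes hv) (htail true) hL0 hr00) ?_).trans_eq ?_
      · positivity
      · ring
    have hfalse : -C ^ (2 ^ m - 1) ≤ (1 - r 0 Fin.elim0) * signedWeightGiven r v C false := by
      have := neg_le_signedWeightGiven v hC hr0 hr1 false
      nlinarith [mul_nonneg hr00 (pow_nonneg hC0.le (2 ^ m - 1))]
    calc ρ * L - 1 / C ≤ C ^ 2 ^ m * (ρ * L - 1 / C) := le_mul_of_one_le_left hL (one_le_pow₀ hC)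
      _ = C ^ 2 ^ m * (ρ * L) - C ^ (2 ^ m - 1) := by rw [hK]; field_simp
      _ ≤ _ := by linarith
  case no =>
    rw [signedWeightGiven_true_of_no r v C hv,
      signedWeightGiven_of_head_correct r v C (by simp [hv]) (fun _ => rfl)]
    have hρr : ρ ≤ 1 - r 0 Fin.elim0 := by linarith [hno hv]
    have := mul_le_mul_of_nonneg_left (htail false) (sub_nonneg.2 hr01)
    have := mul_le_mul_of_nonneg_right hρr hL0
    linarith
  case inv =>
    rw [signedWeightGiven_of_head_correct r v C (by simp [hv]) (by simp [hv]),
      signedWeightGiven_of_head_correct r v C (by simp [hv]) (by simp [hv])]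
    have ht : L ≤ C ^ 2 ^ m * signedWeight m (tailGiven r true) (tailGiven v true) C :=
      (htail true).trans (le_mul_of_one_le_left (hL0.trans (htail true)) (one_le_pow₀ hC))
    have := mul_le_mul_of_nonneg_left ht hr00
    have := mul_le_mul_of_nonneg_left (htail false) (sub_nonneg.2 hr01)
    linarith

theorem pow_sub_div_le_signedWeight {ρ ε C : ℝ} (hC : 1 ≤ C) (hε : 0 ≤ ε) (hρ0 : 0 ≤ ρ)
    (hρε : ρ ≤ 1 - ε) {m : ℕ} (r : (i : Fin m) → (Fin i → Bool) → ℝ)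
    (v : (i : Fin m) → (Fin i → Bool) → QLabel)
    (hr0 : ∀ i w, 0 ≤ r i w) (hr1 : ∀ i w, r i w ≤ 1)
    (hyes : ∀ i w, v i w = .yes → ρ ≤ r i w) (hno : ∀ i w, v i w = .no → r i w ≤ ε)
    (hmC : m / C ≤ ρ ^ m) :
    ρ ^ m - m / C ≤ signedWeight m r v C := by
  induction m with
  | zero =>
    have hcorrect (y : Fin 0 → Bool) : IsCorrect 0 v y := fun i => i.elim0
    simp [signedWeight, weightedGuessProb, guessProb, strVal, answerSign, hcorrect]
  | succ m ih =>
    have hρ1 : ρ ≤ 1 := by linarith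
    push_cast at hmC ⊢
    have hm : m / C ≤ ρ ^ m := calc
      (m : ℝ) / C ≤ (m + 1) / C := by gcongr; linarith
      _ ≤ ρ ^ (m + 1) := hmC
      _ ≤ ρ ^ m := pow_le_pow_of_le_one hρ0 hρ1 m.le_succ
    have hstep : ρ ^ (m + 1) - (m + 1) / C ≤ ρ * (ρ ^ m - m / C) - 1 / C := by
      have : ρ * (m / C) ≤ m / C := mul_le_of_le_one_left (by positivity) hρ1
      rw [pow_succ, add_div]
      linarith
    refine hstep.trans (le_signedWeight_succ hC hε hρ0 hρε r v hr0 hr1 (hyes _ _) (hno _ _)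
      ((sub_nonneg.2 hmC).trans hstep) fun b => ?_)
    exact ih _ _ (fun _ _ => hr0 _ _) (fun _ _ => hr1 _ _) (fun _ _ h => hyes _ _ h)
      (fun _ _ h => hno _ _ h) hm

lemma voteProb_eq_mul_weightedGuessProb {m M N : ℕ} (hN : 2 ^ m ≤ N)
    (r : (i : Fin m) → (Fin i → Bool) → ℝ) (y : Fin m → Bool) :
    voteProb m M N r y =
      ((1 : ℝ) / 2 ^ ((M + 2) * m)) ^ (N - 1) *
        weightedGuessProb m r (2 ^ ((M + 2) * m)) y := by
  have hval : strVal m y ≤ N - 1 := by have := strVal_lt y; omega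
  rw [voteProb, weightedGuessProb, one_div, inv_pow_sub₀ (by positivity) hval, inv_pow]
  ring

section Numerics

variable {m M p : ℕ}

lemma one_div_two_pow_succ_le (hp : 1 ≤ p) : (1 : ℝ) / 2 ^ (M + 1) ≤ (1 - 1 / 2 ^ p) / 2 ^ M := by
  have : (1 : ℝ) / 2 ^ p ≤ 1 / 2 := by gcongr; exact le_self_pow₀ one_le_two (by omega)
  rw [show (1 : ℝ) / 2 ^ (M + 1) = (1 / 2) / 2 ^ M by rw [pow_succ]; ring]
  gcongr
  linarith

lemma cast_div_le_two_pow_mul :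
    (m : ℝ) / 2 ^ ((M + 2) * m) ≤ 1 / (2 ^ m * 2 ^ (M * m)) := by
  have hm : (m : ℝ) ≤ 2 ^ m := by exact_mod_cast Nat.lt_two_pow_self.le
  calc (m : ℝ) / 2 ^ ((M + 2) * m) ≤ 2 ^ m / 2 ^ ((M + 2) * m) := by gcongr
    _ = 1 / (2 ^ m * 2 ^ (M * m)) := by
      rw [show (M + 2) * m = m + (m + M * m) by ring, pow_add, pow_add]
      field_simp

lemma cast_div_le_pow (hp : 1 ≤ p) :
    (m : ℝ) / 2 ^ ((M + 2) * m) ≤ ((1 - 1 / 2 ^ p) / 2 ^ M) ^ m :=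
  calc (m : ℝ) / 2 ^ ((M + 2) * m) ≤ 1 / (2 ^ m * 2 ^ (M * m)) := cast_div_le_two_pow_mul
    _ = (1 / 2 ^ (M + 1)) ^ m := by rw [div_pow, one_pow, ← pow_mul, ← pow_add]; ring_nf
    _ ≤ ((1 - 1 / 2 ^ p) / 2 ^ M) ^ m :=
      pow_le_pow_left₀ (by positivity) (one_div_two_pow_succ_le hp) m

lemma one_div_two_pow_mul_le_pow_sub_div (hp : 1 ≤ p) :
    (1 / 2 ^ (M * m) : ℝ) * (1 - 1 / 2 ^ m - m / (2 ^ p - 1)) ≤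
      ((1 - 1 / 2 ^ p) / 2 ^ M) ^ m - m / 2 ^ ((M + 2) * m) := by
  have h2p : (2 : ℝ) ≤ 2 ^ p := le_self_pow₀ one_le_two (by omega)
  have hε : (1 : ℝ) / 2 ^ p ≤ 1 / (2 ^ p - 1) :=
    one_div_le_one_div_of_le (by linarith) (by linarith)
  have hε1 : (1 : ℝ) / 2 ^ p ≤ 1 := (div_le_one₀ (by positivity)).2 (by linarith)
  have hbernoulli : 1 - m / (2 ^ p - 1) ≤ (1 - (1 : ℝ) / 2 ^ p) ^ m := calc
    1 - m / (2 ^ p - 1) ≤ 1 + m * -((1 : ℝ) / 2 ^ p) := by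
      have := mul_le_mul_of_nonneg_left hε (Nat.cast_nonneg (α := ℝ) m)
      rw [mul_one_div, mul_one_div] at this
      rw [mul_neg, mul_one_div]
      linarith
    _ ≤ (1 - 1 / 2 ^ p) ^ m := by
      rw [sub_eq_add_neg]
      exact one_add_mul_le_pow (by linarith) m
  have hmC := cast_div_le_two_pow_mul (M := M) (m := m)
  rw [div_pow, ← pow_mul, mul_comm M m]
  calc (1 / 2 ^ (m * M) : ℝ) * (1 - 1 / 2 ^ m - m / (2 ^ p - 1))
      = (1 - m / (2 ^ p - 1)) / 2 ^ (m * M) - 1 / (2 ^ m * 2 ^ (m * M)) := by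
        field_simp; ring
    _ ≤ (1 - 1 / 2 ^ p) ^ m / 2 ^ (m * M) - m / 2 ^ ((M + 2) * m) := by
      rw [mul_comm m M]; gcongr

end Numerics

theorem hierarchical_voting_lower_bound_general (m M p N : ℕ)
    (hp : 1 ≤ p) (hN : 2 ^ m ≤ N)
    (r : (i : Fin m) → (Fin i → Bool) → ℝ)
    (v : (i : Fin m) → (Fin i → Bool) → QLabel)
    (hr0 : ∀ i w, 0 ≤ r i w) (hr1 : ∀ i w, r i w ≤ 1)
    (hyes : ∀ i w, v i w = QLabel.yes → (1 - 1 / 2 ^ p : ℝ) / 2 ^ M ≤ r i w)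
    (hno : ∀ i w, v i w = QLabel.no → r i w ≤ (1 / 2 ^ p : ℝ)) :
    ((1 : ℝ) / 2 ^ ((M + 2) * m)) ^ (N - 1) * (1 / 2 ^ (M * m)) *
        (1 - 1 / 2 ^ m - (m : ℝ) / (2 ^ p - 1)) ≤
      ∑ y ∈ Finset.univ.filter (IsCorrect m v), voteProb m M N r y -
        ∑ y ∈ Finset.univ.filter (IsIncorrect m v), voteProb m M N r y := by
  have hε1 : (1 : ℝ) / 2 ^ p ≤ 1 := (div_le_one₀ (by positivity)).2 (one_le_pow₀ one_le_two)
  have hρε : (1 - 1 / 2 ^ p : ℝ) / 2 ^ M ≤ 1 - 1 / 2 ^ p :=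
    div_le_self (sub_nonneg.2 hε1) (one_le_pow₀ one_le_two)
  have hsigned := pow_sub_div_le_signedWeight (one_le_pow₀ one_le_two) (by positivity)
    (div_nonneg (sub_nonneg.2 hε1) (by positivity)) hρε r v hr0 hr1 hyes hno (cast_div_le_pow hp)
  rw [sum_isCorrect_sub_sum_isIncorrect, mul_assoc]
  simp only [voteProb_eq_mul_weightedGuessProb hN, mul_left_comm _ (_ ^ (N - 1)), ← mul_sum]
  gcongr
  exact (one_div_two_pow_mul_le_pow_sub_div hp).trans hsigned

/-- **Hierarchical-voting lower bound**: the probability that the surviving query string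
is correct exceeds the probability that it is an incorrect string (whose every mistake
answers 0 where the correct answer is 1) by at least
`(2^{−q})^{N−1} · 2^{−Mm} · (1 − 1/2^m − m/(2^p − 1))`. -/
theorem hierarchical_voting_lower_bound (m M p N : ℕ)
    (hm : 1 ≤ m) (hM : 1 ≤ M) (hp : 1 ≤ p) (hN : 2 ^ m ≤ N)
    (r : (i : Fin m) → (Fin i → Bool) → ℝ)
    (v : (i : Fin m) → (Fin i → Bool) → QLabel)
    (hr0 : ∀ i w, 0 ≤ r i w) (hr1 : ∀ i w, r i w ≤ 1)
    (hyes : ∀ i w, v i w = QLabel.yes → (1 - 1 / 2 ^ p : ℝ) / 2 ^ M ≤ r i w)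
    (hno : ∀ i w, v i w = QLabel.no → r i w ≤ (1 / 2 ^ p : ℝ)) :
    ((1 : ℝ) / 2 ^ ((M + 2) * m)) ^ (N - 1) * (1 / 2 ^ (M * m)) *
        (1 - 1 / 2 ^ m - (m : ℝ) / (2 ^ p - 1)) ≤
      ∑ y ∈ Finset.univ.filter (IsCorrect m v), voteProb m M N r y -
        ∑ y ∈ Finset.univ.filter (IsIncorrect m v), voteProb m M N r y :=
  hierarchical_voting_lower_bound_general m M p N hp hN r v hr0 hr1 hyes hno
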